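/- Let S be a real matrix of rank k ≥ 2 whose minimum nonzero singular value σ_k is unique (σ_k < σ_{k−1}). With R' = (1/2)·σ_k² − (1/(2k))·Σ σ_i² and update S' = S − η·(σ_k·u_k·v_kᵀ − (1/k)·S)/R'² for 0 < η < (k/(k−1))·R'², the condition number strictly increases: κ(S') > κ(S). -/
import Mathlib


open Matrix Finset

/-- With `S = U·Diag(σ)·Vᵀ` a compact SVD of a rank-`k` (`k ≥ 2`) real matrix
whose minimum singular value `σ_k` is unique, `R' = (1/2)σ_k² − (1/(2k))Σσ_i²`, and
`S' = S − η·(σ_k u_k v_kᵀ − (1/k)S)/R'²` for `0 < η < (k/(k−1))·R'²`, the condition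
number (ratio of largest to smallest nonzero singular value) strictly increases:
`κ(S') > κ(S)`. -/
theorem stmt_8 (pr pc k : ℕ) (hk : 2 ≤ k)
    (S : Matrix (Fin pr) (Fin pc) ℝ)
    (U : Matrix (Fin pr) (Fin k) ℝ) (V : Matrix (Fin pc) (Fin k) ℝ)
    (σ : Fin k → ℝ)
    (hU : Uᵀ * U = 1) (hV : Vᵀ * V = 1)
    (hrank : S.rank = k)
    (hSVD : S = U * Matrix.diagonal σ * Vᵀ)
    (hpos : ∀ i, 0 < σ i) (hmono : Antitone σ)
    (hmin : ∀ i : Fin k, i ≠ ⟨k - 1, by omega⟩ → σ ⟨k - 1, by omega⟩ < σ i)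
    (R' : ℝ)
    (hR' : R' = (1 / 2) * (σ ⟨k - 1, by omega⟩) ^ 2 - (1 / (2 * (k : ℝ))) * ∑ i, (σ i) ^ 2)
    (G : Matrix (Fin pr) (Fin pc) ℝ)
    (hG : G = (R' ^ 2)⁻¹ •
      (σ ⟨k - 1, by omega⟩ •
          Matrix.vecMulVec (fun i => U i ⟨k - 1, by omega⟩) (fun j => V j ⟨k - 1, by omega⟩)
        - ((k : ℝ))⁻¹ • S))
    (η : ℝ) (hη0 : 0 < η) (hη1 : η < ((k : ℝ) / ((k : ℝ) - 1)) * R' ^ 2)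
    (hne : (Finset.univ : Finset (Fin k)).Nonempty) :
    ∀ σ' : Fin k → ℝ, (∀ i, 0 < σ' i) →
      S - η • G = U * Matrix.diagonal σ' * Vᵀ →
      Finset.univ.sup' hne σ' / Finset.univ.inf' hne σ'
        > Finset.univ.sup' hne σ / Finset.univ.inf' hne σ := by
  intro σ' hpos' hS'
  have hk0 : 0 < k := by omega
  set m : Fin k := ⟨k - 1, by omega⟩ with hm
  set z : Fin k := ⟨0, by omega⟩ with hz
  have hkR : (0:ℝ) < (k:ℝ) := by exact_mod_cast hk0
  have hkR1 : (1:ℝ) < (k:ℝ) := by exact_mod_cast (by omega : 1 < k)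
  have hR2 : (0:ℝ) < R' ^ 2 := by
    rcases lt_or_eq_of_le (sq_nonneg R') with h | h
    · exact h
    · exfalso
      have : ((k : ℝ) / ((k : ℝ) - 1)) * R' ^ 2 = 0 := by rw [← h]; ring
      linarith [hη1, this]
  -- the singular values of the updated matrix
  set e : Fin k → ℝ := fun i => if i = m then (1:ℝ) else 0 with he
  set τ : Fin k → ℝ := fun i =>
    σ i * (1 + η / ((k:ℝ) * R' ^ 2)) - (if i = m then η * σ m / R' ^ 2 else 0) with hτdef
  have hsub : ∀ f g : Fin k → ℝ, U * Matrix.diagonal (f - g) * Vᵀ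
      = U * Matrix.diagonal f * Vᵀ - U * Matrix.diagonal g * Vᵀ := by
    intro f g
    rw [show (f - g) = fun i => f i - g i from rfl, ← Matrix.diagonal_sub,
      Matrix.mul_sub, Matrix.sub_mul]
  have hsmul : ∀ (c : ℝ) (f : Fin k → ℝ), U * Matrix.diagonal (c • f) * Vᵀ
      = c • (U * Matrix.diagonal f * Vᵀ) := by
    intro c f
    rw [Matrix.diagonal_smul, Matrix.mul_smul, Matrix.smul_mul]
  have h1 : Matrix.vecMulVec (fun i => U i m) (fun j => V j m)
      = U * Matrix.diagonal e * Vᵀ := by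
    ext a b
    simp [Matrix.vecMulVec_apply, Matrix.mul_apply, Matrix.diagonal_apply, he,
      Finset.sum_ite_eq', ite_mul, mul_ite]
  have hτ : τ = σ - η • ((R' ^ 2)⁻¹ • ((σ m) • e - ((k:ℝ))⁻¹ • σ)) := by
    funext i
    by_cases h : i = m <;>
      simp [hτdef, he, h, Pi.sub_apply, Pi.smul_apply, smul_eq_mul] <;>
      field_simp <;> ring
  have key : U * Matrix.diagonal σ' * Vᵀ = U * Matrix.diagonal τ * Vᵀ := by
    rw [← hS', hτ, hsub, hsmul, hsmul, hsub, hsmul, hsmul, ← h1, ← hSVD, hG]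
  have hcancel : ∀ D : Matrix (Fin k) (Fin k) ℝ, Uᵀ * (U * D * Vᵀ) * V = D := by
    intro D
    calc Uᵀ * (U * D * Vᵀ) * V = (Uᵀ * U) * (D * (Vᵀ * V)) := by
          simp only [Matrix.mul_assoc]
      _ = D := by rw [hU, hV, Matrix.one_mul, Matrix.mul_one]
  have hστ : ∀ i, σ' i = τ i := by
    intro i
    have h2 : Matrix.diagonal σ' = Matrix.diagonal τ := by
      rw [← hcancel (Matrix.diagonal σ'), key, hcancel]
    have := congrFun (congrFun h2 i) i
    simpa [Matrix.diagonal_apply_eq] using this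
  -- numeric facts
  have hA : (0:ℝ) < η / ((k:ℝ) * R' ^ 2) := div_pos hη0 (by positivity)
  have hc : (0:ℝ) < η * σ m / R' ^ 2 := div_pos (mul_pos hη0 (hpos m)) hR2
  have hzm : z ≠ m := by
    simp only [hz, hm, ne_eq, Fin.mk.injEq]
    omega
  have hτne : ∀ i, i ≠ m → σ' i = σ i * (1 + η / ((k:ℝ) * R' ^ 2)) := by
    intro i hi; rw [hστ i]; simp [hτdef, hi]
  have hτm : σ' m = σ m * (1 + η / ((k:ℝ) * R' ^ 2)) - η * σ m / R' ^ 2 := by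
    rw [hστ m]; simp [hτdef]
  have hmono' : ∀ i : Fin k, σ i ≤ σ z := fun i => hmono (Fin.mk_le_mk.mpr (Nat.zero_le _))
  have hminle : ∀ i : Fin k, σ m ≤ σ i := by
    intro i
    by_cases h : i = m
    · rw [h]
    · exact le_of_lt (hmin i h)
  have hApos : (0:ℝ) < 1 + η / ((k:ℝ) * R' ^ 2) := by linarith
  have hsup' : Finset.univ.sup' hne σ' = σ' z := by
    apply le_antisymm
    · apply Finset.sup'_le
      intro i _
      by_cases h : i = m
      · rw [h, hτm, hτne z hzm]
        have h3 := mul_le_mul_of_nonneg_right (hminle z) hApos.le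
        linarith
      · rw [hτne i h, hτne z hzm]
        exact mul_le_mul_of_nonneg_right (hmono' i) hApos.le
    · exact Finset.le_sup' σ' (Finset.mem_univ z)
  have hinf' : Finset.univ.inf' hne σ' = σ' m := by
    apply le_antisymm
    · exact Finset.inf'_le σ' (Finset.mem_univ m)
    · apply Finset.le_inf'
      intro i _
      by_cases h : i = m
      · rw [h]
      · rw [hτm, hτne i h]
        have h3 := mul_le_mul_of_nonneg_right (hminle i) hApos.le
        linarith
  have hsup : Finset.univ.sup' hne σ = σ z := by
    apply le_antisymm
    · exact Finset.sup'_le hne σ fun i _ => hmono' i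
    · exact Finset.le_sup' σ (Finset.mem_univ z)
  have hinf : Finset.univ.inf' hne σ = σ m := by
    apply le_antisymm
    · exact Finset.inf'_le σ (Finset.mem_univ m)
    · exact Finset.le_inf' hne σ fun i _ => hminle i
  rw [hsup', hinf', hsup, hinf]
  have hσm : 0 < σ m := hpos m
  have hσz : 0 < σ z := hpos z
  have hσ'm : 0 < σ' m := hpos' m
  rw [gt_iff_lt, div_lt_div_iff₀ hσm hσ'm]
  rw [hτne z hzm, hτm]
  have h4 : 0 < σ z * (η * σ m / R' ^ 2) := mul_pos hσz hc
  nlinarith [h4]
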